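/- Let N ≥ 2, let v ∈ C¹(closed unit ball, ℝ) with symmetrization v̌ defined by v̌(r) = −∫_r^1 ( ⨍_{S^{N−1}} |∇v(sθ)|² dσ(θ) )^{1/2} ds, and let G : [0,∞) × [0,∞) → [0,∞) be continuous and convex in its second variable. Then ∫_{B^N} G(|x|, |∇v̌(x)|²) dx ≤ ∫_{B^N} G(|x|, |∇v(x)|²) dx. In particular, for every 2 < p < ∞, ∫_{B^N} |∇v̌|^p dx ≤ ∫_{B^N} |∇v|^p dx. -/

import Mathlib

open MeasureTheory Metric Set

noncomputable section

/-- `ℝ^N` with the Euclidean structure. -/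
abbrev Euc (N : ℕ) : Type := EuclideanSpace ℝ (Fin N)

/-- The surface measure `σ` on the unit sphere `S^{N-1} ⊆ ℝ^N`. -/
def sphMeasure (N : ℕ) : Measure (Metric.sphere (0 : Euc N) 1) :=
  (volume : Measure (Euc N)).toSphere

/-- The Laplacian `Δ v` of a scalar function on `ℝ^N`. -/
def lap {N : ℕ} (v : Euc N → ℝ) (x : Euc N) : ℝ :=
  ∑ i : Fin N, fderiv ℝ (fun y => fderiv ℝ v y (EuclideanSpace.single i 1)) x
    (EuclideanSpace.single i 1)

/-- The squared Frobenius norm `|∇U|²` of the differential of a map `U`. -/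
def gradSq {N M : ℕ} (U : Euc N → Euc M) (x : Euc N) : ℝ :=
  ∑ i : Fin N, ‖fderiv ℝ U x (EuclideanSpace.single i 1)‖ ^ 2

/-- Spherical average `⨍_{S^{N-1}} |∇v(sθ)|² dσ(θ)` of the squared gradient of `v`. -/
def sAvg {N : ℕ} (v : Euc N → ℝ) (s : ℝ) : ℝ :=
  ⨍ θ : Metric.sphere (0 : Euc N) 1, ‖gradient v (s • (θ : Euc N))‖ ^ 2 ∂(sphMeasure N)

/-- The symmetrization `v̌(r) = -∫_r^1 (⨍_{S^{N-1}} |∇v(sθ)|² dσ(θ))^{1/2} ds`. -/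
def vCheck {N : ℕ} (v : Euc N → ℝ) (r : ℝ) : ℝ :=
  -∫ s in Ioc r 1, Real.sqrt (sAvg v s)

/-- The gradient of the symmetrization: `∇v̌(rθ) = (⨍_{S^{N-1}} |∇v(rθ')|² dσ(θ'))^{1/2} θ`. -/
def gradCheck {N : ℕ} (v : Euc N → ℝ) (x : Euc N) : Euc N :=
  Real.sqrt (sAvg v ‖x‖) • (‖x‖⁻¹ • x)

/-- The Laplacian of the radial symmetrization: `Δv̌(rθ) = v̌''(r) + (N-1)/r · v̌'(r)`,
where `v̌'(r) = √(sAvg v r)`. -/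
def lapCheck {N : ℕ} (v : Euc N → ℝ) (x : Euc N) : ℝ :=
  deriv (fun s => Real.sqrt (sAvg v s)) ‖x‖ + ((N : ℝ) - 1) / ‖x‖ * Real.sqrt (sAvg v ‖x‖)

/-!
In polar coordinates `x = r θ` both integrals over the ball become integrals over `r ∈ (0, 1)` of
spherical averages. On the sphere of radius `r` the integrand of `v̌` is the constant
`G(r, ⨍ |∇v(r ·)|²)`, which by Jensen's inequality for the convex function `G(r, ·)` is at most
`⨍ G(r, |∇v(r ·)|²)`. The `W^{1,p}` bound is the case `G(r, s) = s^{p/2}`.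
-/

namespace MeasureTheory

variable {E F : Type*} [NormedAddCommGroup E] [NormedSpace ℝ E] [Nontrivial E]
  [FiniteDimensional ℝ E] [MeasurableSpace E] [BorelSpace E] [NormedAddCommGroup F]
  (μ : Measure E) [μ.IsAddHaarMeasure]

theorem integral_comp_smul_unitSphere [NormedSpace ℝ F] (f : E → F) :
    ∫ p : sphere (0 : E) 1 × Ioi (0 : ℝ), f ((p.2 : ℝ) • (p.1 : E))
        ∂μ.toSphere.prod (Measure.volumeIoiPow (Module.finrank ℝ E - 1)) = ∫ x, f x ∂μ := by
  have h0 := integral_subtype_comap (μ := μ) (measurableSet_singleton (0 : E)).compl f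
  rw [restrict_compl_singleton] at h0
  rw [← μ.measurePreserving_homeomorphUnitSphereProd.integral_comp
      (Homeomorph.measurableEmbedding _), ← h0]
  refine integral_congr_ae (.of_forall fun x => congrArg f ?_)
  simp [smul_inv_smul₀ (norm_ne_zero_iff.2 x.2)]

theorem integrable_comp_smul_unitSphere_iff {f : E → F} :
    Integrable (fun p : sphere (0 : E) 1 × Ioi (0 : ℝ) => f ((p.2 : ℝ) • (p.1 : E)))
        (μ.toSphere.prod (Measure.volumeIoiPow (Module.finrank ℝ E - 1))) ↔ Integrable f μ := by
  have h0 := integrableOn_iff_comap_subtypeVal (μ := μ) (f := f)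
    (measurableSet_singleton (0 : E)).compl
  rw [IntegrableOn, restrict_compl_singleton] at h0
  rw [← μ.measurePreserving_homeomorphUnitSphereProd.integrable_comp_emb
      (Homeomorph.measurableEmbedding _), h0]
  refine integrable_congr (.of_forall fun x => congrArg f ?_)
  simp [smul_inv_smul₀ (norm_ne_zero_iff.2 x.2)]

theorem integral_le_integral_of_forall_average_unitSphere_le {f g : E → ℝ}
    (hf : Integrable f μ) (hg : Integrable g μ)
    (h : ∀ r : ℝ, 0 < r → ⨍ θ : sphere (0 : E) 1, f (r • (θ : E)) ∂μ.toSphere ≤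
      ⨍ θ : sphere (0 : E) 1, g (r • (θ : E)) ∂μ.toSphere) :
    ∫ x, f x ∂μ ≤ ∫ x, g x ∂μ := by
  rw [← integral_comp_smul_unitSphere μ f, ← integral_comp_smul_unitSphere μ g]
  have hf' := (integrable_comp_smul_unitSphere_iff μ).2 hf
  have hg' := (integrable_comp_smul_unitSphere_iff μ).2 hg
  rw [integral_prod_symm _ hf', integral_prod_symm _ hg']
  refine integral_mono hf'.integral_prod_right hg'.integral_prod_right fun r => ?_
  simp only [← measure_smul_average]
  exact smul_le_smul_of_nonneg_left (h r r.2) ENNReal.toReal_nonneg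

theorem setIntegral_ball_le_of_forall_average_unitSphere_le {f g : E → ℝ} {R : ℝ}
    (hf : IntegrableOn f (ball 0 R) μ) (hg : IntegrableOn g (ball 0 R) μ)
    (h : ∀ r ∈ Ioo 0 R, ⨍ θ : sphere (0 : E) 1, f (r • (θ : E)) ∂μ.toSphere ≤
      ⨍ θ : sphere (0 : E) 1, g (r • (θ : E)) ∂μ.toSphere) :
    ∫ x in ball 0 R, f x ∂μ ≤ ∫ x in ball 0 R, g x ∂μ := by
  rw [← integral_indicator measurableSet_ball, ← integral_indicator measurableSet_ball]
  refine integral_le_integral_of_forall_average_unitSphere_le μ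
    (hf.integrable_indicator measurableSet_ball) (hg.integrable_indicator measurableSet_ball)
    fun r hr => ?_
  have hnorm (θ : sphere (0 : E) 1) : ‖r • (θ : E)‖ = r := by simp [norm_smul, hr.le]
  by_cases hrR : r < R
  · simpa [indicator_of_mem, hnorm, hrR] using h r ⟨hr, hrR⟩
  · simp [indicator_of_notMem, hnorm, hrR]

end MeasureTheory

theorem ContinuousOn.integrable_comp_of_ae_mem_isCompact {α X : Type*} [MeasurableSpace α]
    {μ : Measure α} [IsFiniteMeasure μ] [TopologicalSpace X] [MeasurableSpace X]
    [OpensMeasurableSpace X] {φ : X → ℝ} {t K : Set X} (hφ : ContinuousOn φ t)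
    (hK : IsCompact K) (hKt : K ⊆ t) {f : α → X} (hf : Measurable f) (hft : ∀ x, f x ∈ t)
    (hfK : ∀ᵐ x ∂μ, f x ∈ K) : Integrable (fun x => φ (f x)) μ := by
  obtain ⟨C, hC⟩ := hK.exists_bound_of_continuousOn (hφ.mono hKt)
  have hmeas : Measurable fun x => φ (f x) :=
    hφ.domRestrict.measurable.comp (hf.subtype_mk (h := hft))
  exact .of_bound hmeas.aestronglyMeasurable C (hfK.mono fun x hx => hC _ hx)

theorem ContDiffOn.exists_norm_fderiv_le_of_closedBall {E F : Type*} [NormedAddCommGroup E]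
    [NormedSpace ℝ E] [ProperSpace E] [NormedAddCommGroup F] [NormedSpace ℝ F] {f : E → F}
    {c : E} {R : ℝ} (hR : 0 < R) (hf : ContDiffOn ℝ 1 f (closedBall c R)) :
    ∃ M, ∀ x ∈ ball c R, ‖fderiv ℝ f x‖ ≤ M := by
  have hUD : UniqueDiffOn ℝ (closedBall c R) :=
    uniqueDiffOn_convex (convex_closedBall c R) (by simpa [interior_closedBall c hR.ne'] using hR)
  obtain ⟨M, hM⟩ := (isCompact_closedBall c R).exists_bound_of_continuousOn
    (hf.continuousOn_fderivWithin hUD le_rfl)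
  refine ⟨M, fun x hx => ?_⟩
  rw [← fderivWithin_of_mem_nhds (closedBall_mem_nhds_of_mem hx)]
  exact hM x (ball_subset_closedBall hx)

theorem measurable_gradient {E : Type*} [NormedAddCommGroup E] [InnerProductSpace ℝ E]
    [CompleteSpace E] [MeasurableSpace E] [BorelSpace E] (f : E → ℝ) :
    Measurable (gradient f) :=
  (InnerProductSpace.toDual ℝ E).symm.continuous.measurable.comp (measurable_fderiv ℝ f)

theorem smul_mem_ball_zero_one_of_abs_lt {E : Type*} [NormedAddCommGroup E]
    [NormedSpace ℝ E] {r : ℝ} (hr : |r| < 1) (θ : sphere (0 : E) 1) :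
    r • (θ : E) ∈ ball (0 : E) 1 := by
  simpa [norm_smul] using hr

section Symmetrization

variable {N : ℕ}

instance : IsFiniteMeasure (sphMeasure N) := by unfold sphMeasure; infer_instance

instance [NeZero N] : NeZero (sphMeasure N) := ⟨Measure.toSphere_ne_zero _⟩

theorem sAvg_nonneg (v : Euc N → ℝ) (s : ℝ) : 0 ≤ sAvg v s :=
  integral_nonneg fun _ => sq_nonneg _

theorem measurable_sAvg (v : Euc N → ℝ) : Measurable (sAvg v) := by
  have h : Measurable fun p : ℝ × sphere (0 : Euc N) 1 => ‖gradient v (p.1 • (p.2 : Euc N))‖ ^ 2 :=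
    ((measurable_gradient v).comp (by fun_prop)).norm.pow_const 2
  exact h.stronglyMeasurable.integral_prod_right'.measurable

theorem norm_gradCheck_sq (v : Euc N → ℝ) {x : Euc N} (hx : x ≠ 0) :
    ‖gradCheck v x‖ ^ 2 = sAvg v ‖x‖ := by
  rw [gradCheck, norm_smul, norm_smul, norm_inv, norm_norm, inv_mul_cancel₀ (norm_ne_zero_iff.2 hx),
    mul_one, Real.norm_of_nonneg (Real.sqrt_nonneg _), Real.sq_sqrt (sAvg_nonneg v _)]

theorem measurable_norm_gradient_sq_comp_smul (v : Euc N → ℝ) (r : ℝ) :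
    Measurable fun θ : sphere (0 : Euc N) 1 => ‖gradient v (r • (θ : Euc N))‖ ^ 2 :=
  ((measurable_gradient v).comp (by fun_prop)).norm.pow_const 2

variable {v : Euc N → ℝ} {K r : ℝ}

theorem integrable_norm_gradient_sq_comp_smul
    (hK : ∀ x ∈ ball (0 : Euc N) 1, ‖gradient v x‖ ^ 2 ≤ K) (hr : |r| < 1) :
    Integrable (fun θ : sphere (0 : Euc N) 1 => ‖gradient v (r • (θ : Euc N))‖ ^ 2)
      (sphMeasure N) := by
  refine .of_bound (measurable_norm_gradient_sq_comp_smul v r).aestronglyMeasurable K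
    (.of_forall fun θ => ?_)
  rw [Real.norm_of_nonneg (sq_nonneg _)]
  exact hK _ (smul_mem_ball_zero_one_of_abs_lt hr θ)

theorem sAvg_le [NeZero N] (hK : ∀ x ∈ ball (0 : Euc N) 1, ‖gradient v x‖ ^ 2 ≤ K)
    (hr : |r| < 1) : sAvg v r ≤ K := by
  obtain ⟨θ, hθ⟩ := exists_average_le (NeZero.ne _) (integrable_norm_gradient_sq_comp_smul hK hr)
  exact hθ.trans (hK _ (smul_mem_ball_zero_one_of_abs_lt hr θ))

theorem map_sAvg_le_average [NeZero N] {g : ℝ → ℝ} (hg : ConvexOn ℝ (Ici 0) g)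
    (hgc : ContinuousOn g (Ici 0)) (hK : ∀ x ∈ ball (0 : Euc N) 1, ‖gradient v x‖ ^ 2 ≤ K)
    (hr : |r| < 1) :
    g (sAvg v r) ≤
      ⨍ θ : sphere (0 : Euc N) 1, g (‖gradient v (r • (θ : Euc N))‖ ^ 2) ∂sphMeasure N :=
  hg.map_average_le hgc isClosed_Ici (.of_forall fun _ => mem_Ici.2 (sq_nonneg _))
    (integrable_norm_gradient_sq_comp_smul hK hr)
    (hgc.integrable_comp_of_ae_mem_isCompact isCompact_Icc Icc_subset_Ici_self
      (measurable_norm_gradient_sq_comp_smul v r) (fun _ => mem_Ici.2 (sq_nonneg _))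
      (.of_forall fun θ => ⟨sq_nonneg _, hK _ (smul_mem_ball_zero_one_of_abs_lt hr θ)⟩))

end Symmetrization

theorem setIntegral_ball_comp_norm_gradCheck_sq_le {N : ℕ} [NeZero N] {v : Euc N → ℝ} {K : ℝ}
    (hK : ∀ x ∈ ball (0 : Euc N) 1, ‖gradient v x‖ ^ 2 ≤ K) {G : ℝ → ℝ → ℝ}
    (hGcont : ContinuousOn (fun q : ℝ × ℝ => G q.1 q.2) (Ici 0 ×ˢ Ici 0))
    (hGconv : ∀ r ∈ Ici (0 : ℝ), ConvexOn ℝ (Ici 0) (fun s => G r s)) :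
    (∫ x in ball (0 : Euc N) 1, G ‖x‖ (‖gradCheck v x‖ ^ 2))
        ≤ ∫ x in ball (0 : Euc N) 1, G ‖x‖ (‖gradient v x‖ ^ 2) := by
  have : IsFiniteMeasure (volume.restrict (ball (0 : Euc N) 1)) :=
    isFiniteMeasure_restrict.2 measure_ball_lt_top.ne
  have hint {f : Euc N → ℝ} (hf : Measurable f) (hf0 : ∀ x, 0 ≤ f x)
      (hfK : ∀ x ∈ ball (0 : Euc N) 1, f x ≤ K) :
      IntegrableOn (fun x => G ‖x‖ (f x)) (ball (0 : Euc N) 1) :=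
    hGcont.integrable_comp_of_ae_mem_isCompact (isCompact_Icc.prod isCompact_Icc)
      (prod_mono Icc_subset_Ici_self Icc_subset_Ici_self) (measurable_norm.prodMk hf)
      (fun x => ⟨norm_nonneg x, hf0 x⟩)
      (ae_restrict_of_forall_mem measurableSet_ball fun x hx =>
        ⟨⟨norm_nonneg x, (mem_ball_zero_iff.1 hx).le⟩, hf0 x, hfK x hx⟩)
  calc (∫ x in ball (0 : Euc N) 1, G ‖x‖ (‖gradCheck v x‖ ^ 2))
      = ∫ x in ball (0 : Euc N) 1, G ‖x‖ (sAvg v ‖x‖) := by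
        refine setIntegral_congr_ae measurableSet_ball ?_
        filter_upwards [compl_mem_ae_iff.2 (measure_singleton (0 : Euc N))] with x hx _
        rw [norm_gradCheck_sq v hx]
    _ ≤ ∫ x in ball (0 : Euc N) 1, G ‖x‖ (‖gradient v x‖ ^ 2) := by
        refine setIntegral_ball_le_of_forall_average_unitSphere_le volume
          (hint ((measurable_sAvg v).comp measurable_norm) (fun _ => sAvg_nonneg v _)
            fun x hx => sAvg_le hK (by simpa using hx))
          (hint ((measurable_gradient v).norm.pow_const 2) (fun _ => sq_nonneg _) hK)
          fun r hr => ?_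
        have hGr : ContinuousOn (G r) (Ici 0) :=
          hGcont.comp (Continuous.prodMk_right r).continuousOn fun s hs => ⟨hr.1.le, hs⟩
        have hnorm (θ : sphere (0 : Euc N) 1) : ‖r • (θ : Euc N)‖ = r := by
          simp [norm_smul, hr.1.le]
        change ⨍ θ, _ ∂sphMeasure N ≤ ⨍ θ, _ ∂sphMeasure N
        simp only [hnorm, average_const]
        exact map_sAvg_le_average (hGconv r hr.1.le) hGr hK (by rw [abs_of_pos hr.1]; exact hr.2)

theorem symmetrization_convex_gradient_inequality
    {N : ℕ} (hN : 2 ≤ N) (v : Euc N → ℝ) (hv : ContDiffOn ℝ 1 v (closedBall 0 1))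
    (G : ℝ → ℝ → ℝ)
    (hGcont : ContinuousOn (fun q : ℝ × ℝ => G q.1 q.2) (Ici 0 ×ˢ Ici 0))
    (hGconv : ∀ r ∈ Ici (0 : ℝ), ConvexOn ℝ (Ici 0) (fun s => G r s)) :
    (∫ x in ball (0 : Euc N) 1, G ‖x‖ (‖gradCheck v x‖ ^ 2))
        ≤ ∫ x in ball (0 : Euc N) 1, G ‖x‖ (‖gradient v x‖ ^ 2) ∧
      ∀ p : ℝ, 2 < p →
        (∫ x in ball (0 : Euc N) 1, ‖gradCheck v x‖ ^ p)
          ≤ ∫ x in ball (0 : Euc N) 1, ‖gradient v x‖ ^ p := by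
  have : NeZero N := ⟨by omega⟩
  obtain ⟨M, hM⟩ := hv.exists_norm_fderiv_le_of_closedBall one_pos
  have hK : ∀ x ∈ ball (0 : Euc N) 1, ‖gradient v x‖ ^ 2 ≤ M ^ 2 := fun x hx => by
    rw [gradient, LinearIsometryEquiv.norm_map]
    exact pow_le_pow_left₀ (norm_nonneg _) (hM x hx) 2
  refine ⟨setIntegral_ball_comp_norm_gradCheck_sq_le hK hGcont hGconv, fun p hp => ?_⟩
  have hpow (w : Euc N) : (‖w‖ ^ 2) ^ (p / 2) = ‖w‖ ^ p := by
    rw [← Real.rpow_natCast, ← Real.rpow_mul (norm_nonneg w)]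
    norm_num [mul_div_cancel₀]
  simpa only [hpow] using setIntegral_ball_comp_norm_gradCheck_sq_le (v := v) hK
    (G := fun _ s => s ^ (p / 2))
    ((Real.continuous_rpow_const (by positivity)).comp continuous_snd).continuousOn
    fun _ _ => convexOn_rpow (by linarith)
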